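/- The modified two-parameter scheme's dispersion relation holds: the plane wave V^n(x) = a·exp(i(kx − ωnτ)) satisfies i(V^{n+1} − V^{n−1})/(2τ) + (θ/2·V^{n+1}_{xx} + (1−θ)V^n_{xx} + θ/2·V^{n−1}_{xx}) = (λγ/2)|V^n|²(V^{n+1} + V^{n−1}) + (λ(1−γ)/2)(V^n)²(conj(V)^{n+1} + conj(V)^{n−1}) if and only if sin(ωτ) = K²(θcos(ωτ) + (1−θ)) + q·cos(ωτ), where K = k√τ and q = λτ|a|². -/

import Mathlib

/-!
Along the plane wave every time shift multiplies `V^n` by the unimodular factor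
`e^{∓iωτ} = cos ωτ ∓ i sin ωτ`, each `∂ₓ²` multiplies it by `-k²`, and
`(V^n)² conj(V^{n±1}) = |a|² e^{±iωτ} V^n`. Hence the difference of the two sides of the
scheme is `V^n` times the real number `(sin ωτ - k²τ(θ cos ωτ + 1 - θ) - λτa² cos ωτ) / τ`,
and `V^n ≠ 0`.
-/

open Complex ComplexConjugate

theorem deriv_const_mul_cexp_mul_ofReal (c b : ℂ) :
    deriv (fun y : ℝ => c * cexp (b * y)) = fun y : ℝ => b * (c * cexp (b * y)) := by
  funext y
  have hlin : HasDerivAt (fun y : ℝ => b * (y : ℂ)) b y := by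
    simpa using (ofRealCLM.hasDerivAt (x := y)).const_mul b
  rw [(hlin.cexp.const_mul c).deriv]
  ring

theorem iteratedDeriv_const_mul_cexp_mul_ofReal (n : ℕ) (c b : ℂ) :
    iteratedDeriv n (fun y : ℝ => c * cexp (b * y)) = fun y : ℝ => b ^ n * (c * cexp (b * y)) := by
  induction n with
  | zero => simp
  | succ n ih =>
    simp_rw [iteratedDeriv_succ, ih, ← mul_assoc, deriv_const_mul_cexp_mul_ofReal]
    funext y
    ring

noncomputable def schemeLinearPart (θ τ : ℝ) (V : ℤ → ℝ → ℂ) (n : ℤ) (x : ℝ) : ℂ :=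
  I * (V (n + 1) x - V (n - 1) x) / (2 * (τ : ℂ))
    + (((θ / 2 : ℝ) : ℂ) * iteratedDeriv 2 (V (n + 1)) x
        + (((1 - θ) : ℝ) : ℂ) * iteratedDeriv 2 (V n) x
        + ((θ / 2 : ℝ) : ℂ) * iteratedDeriv 2 (V (n - 1)) x)

noncomputable def schemeNonlinearPart (γ lam : ℝ) (V : ℤ → ℝ → ℂ) (n : ℤ) (x : ℝ) : ℂ :=
  ((lam * γ / 2 : ℝ) : ℂ) * ((‖V n x‖ ^ 2 : ℝ) : ℂ) * (V (n + 1) x + V (n - 1) x)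
    + ((lam * (1 - γ) / 2 : ℝ) : ℂ) * (V n x) ^ 2 * (conj (V (n + 1) x) + conj (V (n - 1) x))

noncomputable def planeWave (a k ω τ : ℝ) (n : ℤ) (x : ℝ) : ℂ :=
  a * cexp (I * ((k * x - ω * n * τ : ℝ) : ℂ))

section
variable (a k ω τ : ℝ)

theorem planeWave_eq_const_mul_cexp (n : ℤ) :
    planeWave a k ω τ n = fun x : ℝ => (a * cexp (-(ω * n * τ) * I)) * cexp (k * I * x) := by
  funext x
  rw [planeWave, mul_assoc (a : ℂ), ← Complex.exp_add]
  push_cast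
  ring_nf

theorem iteratedDeriv_two_planeWave (n : ℤ) (x : ℝ) :
    iteratedDeriv 2 (planeWave a k ω τ n) x = -k ^ 2 * planeWave a k ω τ n x := by
  rw [planeWave_eq_const_mul_cexp, iteratedDeriv_const_mul_cexp_mul_ofReal, mul_pow, I_sq]
  ring

theorem planeWave_add_one (n : ℤ) (x : ℝ) :
    planeWave a k ω τ (n + 1) x
      = (Real.cos (ω * τ) - Real.sin (ω * τ) * I) * planeWave a k ω τ n x := by
  have hshift : cexp (-((ω * τ : ℝ) : ℂ) * I) = Real.cos (ω * τ) - Real.sin (ω * τ) * I := by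
    rw [exp_mul_I, cos_neg, sin_neg, ← ofReal_cos, ← ofReal_sin]
    ring
  rw [← hshift, planeWave, planeWave, mul_left_comm, ← Complex.exp_add]
  push_cast
  ring_nf

theorem planeWave_sub_one (n : ℤ) (x : ℝ) :
    planeWave a k ω τ (n - 1) x
      = (Real.cos (ω * τ) + Real.sin (ω * τ) * I) * planeWave a k ω τ n x := by
  rw [planeWave, planeWave, ofReal_cos, ofReal_sin, ← exp_mul_I, mul_left_comm, ← Complex.exp_add]
  push_cast
  ring_nf

theorem norm_planeWave (n : ℤ) (x : ℝ) : ‖planeWave a k ω τ n x‖ = |a| := by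
  rw [planeWave, norm_mul, norm_real, Real.norm_eq_abs, mul_comm I, norm_exp_ofReal_mul_I, mul_one]

theorem conj_planeWave_add_one (n : ℤ) (x : ℝ) :
    conj (planeWave a k ω τ (n + 1) x)
      = (Real.cos (ω * τ) + Real.sin (ω * τ) * I) * conj (planeWave a k ω τ n x) := by
  rw [planeWave_add_one, map_mul, map_sub, map_mul, conj_ofReal, conj_ofReal, conj_I]
  ring

theorem conj_planeWave_sub_one (n : ℤ) (x : ℝ) :
    conj (planeWave a k ω τ (n - 1) x)
      = (Real.cos (ω * τ) - Real.sin (ω * τ) * I) * conj (planeWave a k ω τ n x) := by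
  rw [planeWave_sub_one, map_mul, map_add, map_mul, conj_ofReal, conj_ofReal, conj_I]
  ring

theorem planeWave_ne_zero (ha : a ≠ 0) (n : ℤ) (x : ℝ) : planeWave a k ω τ n x ≠ 0 :=
  mul_ne_zero (ofReal_ne_zero.mpr ha) (exp_ne_zero _)

theorem schemeLinearPart_sub_schemeNonlinearPart_planeWave (θ γ lam : ℝ) (hτ : τ ≠ 0) (n : ℤ)
    (x : ℝ) :
    schemeLinearPart θ τ (planeWave a k ω τ) n x - schemeNonlinearPart γ lam (planeWave a k ω τ) n x
      = planeWave a k ω τ n x * (((Real.sin (ω * τ)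
          - k ^ 2 * τ * (θ * Real.cos (ω * τ) + (1 - θ))
          - lam * τ * a ^ 2 * Real.cos (ω * τ)) / τ : ℝ) : ℂ) := by
  have hWW : planeWave a k ω τ n x * conj (planeWave a k ω τ n x) = (a : ℂ) ^ 2 := by
    rw [mul_conj, normSq_eq_norm_sq, norm_planeWave, sq_abs]
    push_cast
    rfl
  rw [schemeLinearPart, schemeNonlinearPart, iteratedDeriv_two_planeWave,
    iteratedDeriv_two_planeWave, iteratedDeriv_two_planeWave, conj_planeWave_add_one,
    conj_planeWave_sub_one, norm_planeWave, sq_abs, planeWave_add_one, planeWave_sub_one]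
  have hτ' : (τ : ℂ) ≠ 0 := ofReal_ne_zero.mpr hτ
  push_cast
  field_simp
  linear_combination -2 * lam * (1 - γ) * τ * cos (ω * τ) * planeWave a k ω τ n x * hWW
    - 2 * sin (ω * τ) * planeWave a k ω τ n x * I_sq

theorem schemeLinearPart_planeWave_eq_iff (θ γ lam : ℝ) (hτ : τ ≠ 0) (ha : a ≠ 0) (n : ℤ)
    (x : ℝ) :
    schemeLinearPart θ τ (planeWave a k ω τ) n x = schemeNonlinearPart γ lam (planeWave a k ω τ) n x
      ↔ Real.sin (ω * τ)
        = k ^ 2 * τ * (θ * Real.cos (ω * τ) + (1 - θ)) + lam * τ * a ^ 2 * Real.cos (ω * τ) := by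
  rw [← sub_eq_zero, schemeLinearPart_sub_schemeNonlinearPart_planeWave a k ω τ θ γ lam hτ,
    mul_eq_zero, ofReal_eq_zero, div_eq_zero_iff, sub_sub, sub_eq_zero]
  simp [planeWave_ne_zero a k ω τ ha, hτ]

end

/-- The plane wave `V^n(x) = a·exp(i(kx − ωnτ))` (with real amplitude `a > 0`)
satisfies the modified two-parameter conservative scheme
`i(V^{n+1} − V^{n−1})/(2τ) + (θ/2·V^{n+1}_{xx} + (1−θ)V^n_{xx} + θ/2·V^{n−1}_{xx})
 = (λγ/2)|V^n|²(V^{n+1} + V^{n−1}) + (λ(1−γ)/2)(V^n)²(conj V^{n+1} + conj V^{n−1})`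
if and only if `sin(ωτ) = K²(θcos(ωτ) + (1−θ)) + q·cos(ωτ)`, where `K² = k²τ` and
`q = λτ|a|²`. -/
theorem stmt_19 (θ γ lam k ω τ : ℝ) (hτ : 0 < τ) (a : ℝ) (ha : 0 < a)
    (V : ℤ → ℝ → ℂ)
    (hV : ∀ (n : ℤ) (x : ℝ),
      V n x = (a : ℂ) * Complex.exp (Complex.I * ((k * x - ω * (n : ℝ) * τ : ℝ) : ℂ))) :
    (∀ (n : ℤ) (x : ℝ),
      Complex.I * (V (n + 1) x - V (n - 1) x) / (2 * (τ : ℂ))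
        + (((θ / 2 : ℝ) : ℂ) * iteratedDeriv 2 (V (n + 1)) x
            + (((1 - θ) : ℝ) : ℂ) * iteratedDeriv 2 (V n) x
            + ((θ / 2 : ℝ) : ℂ) * iteratedDeriv 2 (V (n - 1)) x)
      = ((lam * γ / 2 : ℝ) : ℂ) * ((‖V n x‖ ^ 2 : ℝ) : ℂ) *
            (V (n + 1) x + V (n - 1) x)
          + ((lam * (1 - γ) / 2 : ℝ) : ℂ) * (V n x) ^ 2 *
            (conj (V (n + 1) x) + conj (V (n - 1) x)))
    ↔ Real.sin (ω * τ)
        = k ^ 2 * τ * (θ * Real.cos (ω * τ) + (1 - θ))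
          + lam * τ * a ^ 2 * Real.cos (ω * τ) := by
  obtain rfl : V = planeWave a k ω τ := funext₂ hV
  have hscheme := schemeLinearPart_planeWave_eq_iff a k ω τ θ γ lam hτ.ne' ha.ne'
  exact ⟨fun h => (hscheme 0 0).mp (h 0 0), fun h n x => (hscheme n x).mpr h⟩
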